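/- arXiv:1610.03888 — 3 statements merged into one kernel-verified Lean document; each statement's English description precedes it below -/
import Mathlib

section
/- For any flag simplicial complex K with f-vector (f_0, f_1, f_2, ...), one has f_0^3 - 3 f_0 (f_0 + f_1) + 3 (f_0 + 2 f_1 + f_2) - f_0 ≥ 0; equivalently, f_2 ≥ C(f_0,3) - (f_0 - 2)(C(f_0,2) - f_1). -/
structure SimplicialComplex (V : Type*) [DecidableEq V] [Fintype V] where
  faces : Finset (Finset V)
  down_closed : ∀ σ ∈ faces, ∀ τ ⊆ σ, τ ∈ faces
  singleton_mem : ∀ v : V, {v} ∈ faces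

def SimplicialComplex.IsFlag {V : Type*} [DecidableEq V] [Fintype V]
    (K : SimplicialComplex V) : Prop :=
  ∀ σ : Finset V, σ ∉ K.faces → (∀ τ, τ ⊂ σ → τ ∈ K.faces) → σ.card = 2

private lemma int_choose_two (n : ℕ) : 2 * (n.choose 2 : ℤ) = n * (n - 1) := by
  induction n with
  | zero => norm_num
  | succ m ih =>
    rw [Nat.choose_succ_succ, Nat.choose_one_right]
    push_cast
    linear_combination ih

private lemma int_choose_three (n : ℕ) :
    6 * (n.choose 3 : ℤ) = n * (n - 1) * (n - 2) := by
  induction n with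
  | zero => norm_num
  | succ m ih =>
    rw [Nat.choose_succ_succ]
    push_cast
    linear_combination ih + 3 * int_choose_two m

/-- For a flag simplicial complex with `f₀` vertices, `f₁` edges and `f₂` triangles,
`f₀³ - 3 f₀ (f₀ + f₁) + 3 (f₀ + 2 f₁ + f₂) - f₀ ≥ 0`. -/
theorem flag_f2_lower_bound {V : Type*} [DecidableEq V] [Fintype V]
    (K : SimplicialComplex V) (hK : K.IsFlag)
    (f₀ f₁ f₂ : ℕ)
    (hf₀ : f₀ = Fintype.card V)
    (hf₁ : f₁ = (K.faces.filter fun σ => σ.card = 2).card)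
    (hf₂ : f₂ = (K.faces.filter fun σ => σ.card = 3).card) :
    0 ≤ (f₀ : ℤ) ^ 3 - 3 * f₀ * (f₀ + f₁) + 3 * (f₀ + 2 * f₁ + f₂) - f₀ := by
  classical
  set n := Fintype.card V with hn
  -- re-express f₁ and f₂
  have hf₁' : f₁ = ((Finset.univ.powersetCard 2).filter (· ∈ K.faces)).card := by
    rw [hf₁]; congr 1; ext σ
    simp [Finset.mem_powersetCard, Finset.subset_univ, and_comm]
  have hf₂' : f₂ = ((Finset.univ.powersetCard 3).filter (· ∈ K.faces)).card := by
    rw [hf₂]; congr 1; ext σ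
    simp [Finset.mem_powersetCard, Finset.subset_univ, and_comm]
  set NE := (Finset.univ.powersetCard 2).filter (· ∉ K.faces) with hNE
  set T := (Finset.univ.powersetCard 3).filter (· ∉ K.faces) with hT
  have hB : f₁ + NE.card = n.choose 2 := by
    rw [hf₁', hNE]
    have := Finset.card_filter_add_card_filter_not
      (s := Finset.univ.powersetCard (α := V) 2) (p := (· ∈ K.faces))
    simpa [Finset.card_powersetCard, Finset.card_univ] using this
  have hA : f₂ + T.card = n.choose 3 := by
    rw [hf₂', hT]
    have := Finset.card_filter_add_card_filter_not
      (s := Finset.univ.powersetCard (α := V) 3) (p := (· ∈ K.faces))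
    simpa [Finset.card_powersetCard, Finset.card_univ] using this
  -- key combinatorial bound: T.card ≤ NE.card * (n - 2)
  have hmain : T.card ≤ NE.card * (n - 2) := by
    rcases lt_or_ge n 2 with h2 | h2
    · have hc3 : n.choose 3 = 0 := Nat.choose_eq_zero_of_lt (by omega)
      omega
    · set S := NE.biUnion (fun p => {p} ×ˢ (Finset.univ \ p)) with hS
      have hdisj : (NE : Set (Finset V)).PairwiseDisjoint
          (fun p => {p} ×ˢ (Finset.univ \ p)) := by
        intro p hp q hq hpq
        simp only [Function.onFun, Finset.disjoint_left, Finset.mem_product,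
          Finset.mem_singleton]
        rintro ⟨a, b⟩ ⟨rfl, -⟩ ⟨h, -⟩
        exact hpq h
      have hScard : S.card = NE.card * (n - 2) := by
        rw [hS, Finset.card_biUnion hdisj,
          Finset.sum_congr rfl (g := fun _ => n - 2) (fun p hp => ?_),
          Finset.sum_const, smul_eq_mul]
        have hp2 : p.card = 2 := by
          rw [hNE, Finset.mem_filter, Finset.mem_powersetCard] at hp
          exact hp.1.2
        rw [Finset.card_product, Finset.card_singleton, one_mul,
          Finset.card_univ_diff, hp2]
      have hTS : T.card ≤ S.card := by
        apply Finset.card_le_card_of_surjOn (fun x => insert x.2 x.1)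
        intro t ht
        rw [Finset.mem_coe, hT, Finset.mem_filter, Finset.mem_powersetCard] at ht
        obtain ⟨⟨-, ht3⟩, htnf⟩ := ht
        have hne : Nonempty V := Fintype.card_pos_iff.mp (by omega)
        -- find a non-edge inside t
        have hex : ∃ τ, τ ⊂ t ∧ τ ∉ K.faces := by
          by_contra hcon
          push_neg at hcon
          have := hK t htnf hcon
          omega
        obtain ⟨τ, hτt, hτnf⟩ := hex
        have hτ2 : τ.card = 2 := by
          have hlt : τ.card < 3 := ht3 ▸ Finset.card_lt_card hτt
          rcases Nat.lt_or_ge τ.card 2 with hle | hge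
          · exfalso
            obtain ⟨x, hx⟩ := (Finset.card_le_one_iff_subset_singleton (s := τ)).mp (by omega)
            exact hτnf (K.down_closed _ (K.singleton_mem x) _ hx)
          · omega
        have hcard1 : (t \ τ).card = 1 := by
          rw [Finset.card_sdiff_of_subset hτt.subset, ht3, hτ2]
        obtain ⟨v, hv⟩ := Finset.card_eq_one.mp hcard1
        have hvmem : v ∈ t \ τ := hv ▸ Finset.mem_singleton_self v
        refine ⟨(τ, v), ?_, ?_⟩
        · rw [Finset.mem_coe, hS, Finset.mem_biUnion]
          refine ⟨τ, ?_, ?_⟩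
          · rw [hNE, Finset.mem_filter, Finset.mem_powersetCard]
            exact ⟨⟨Finset.subset_univ _, hτ2⟩, hτnf⟩
          · rw [Finset.mem_product]
            exact ⟨Finset.mem_singleton_self τ,
              Finset.mem_sdiff.mpr ⟨Finset.mem_univ v, (Finset.mem_sdiff.mp hvmem).2⟩⟩
        · show insert v τ = t
          have h1 : τ ∪ (t \ τ) = t := Finset.union_sdiff_of_subset hτt.subset
          rw [hv] at h1
          rw [← h1, Finset.union_comm]
          exact Finset.insert_eq v τ
      exact hTS.trans_eq hScard
  -- arithmetic finish
  have hAz : (f₂ : ℤ) + T.card = n.choose 3 := by exact_mod_cast hA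
  have hBz : (f₁ : ℤ) + NE.card = n.choose 2 := by exact_mod_cast hB
  have h3 := int_choose_three n
  have h2 := int_choose_two n
  have hf0 : (f₀ : ℤ) = n := by exact_mod_cast hf₀
  rcases lt_or_ge n 2 with hlt | hge
  · have hc2 : n.choose 2 = 0 := Nat.choose_eq_zero_of_lt (by omega)
    have hc3 : n.choose 3 = 0 := Nat.choose_eq_zero_of_lt (by omega)
    have h1 : f₁ = 0 := by omega
    have h2' : f₂ = 0 := by omega
    have hn01 : n = 0 ∨ n = 1 := by omega
    rw [hf0, h1, h2']
    rcases hn01 with h | h <;> rw [h] <;> norm_num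
  · have hn2 : ((n - 2 : ℕ) : ℤ) = (n : ℤ) - 2 := by omega
    have key : (T.card : ℤ) ≤ (NE.card : ℤ) * ((n : ℤ) - 2) := by
      rw [← hn2]
      exact_mod_cast hmain
    rw [hf0]
    nlinarith [key, hAz, hBz, h3, h2,
      mul_le_mul_of_nonneg_right (le_of_eq hBz) (by omega : (0:ℤ) ≤ (n:ℤ) - 2)]
end

section
/- If 1 + s_1 t + s_2 t^2 + ... = ∏_{i≥1}(1-(-t)^i)^{(-1)^{i+1} v_i} with v_i nonnegative integers, then s_1 ≥ 0, s_2 ≥ s_1(s_1-1)/2, and s_3 ≥ (s_1/3)(3 s_2 - s_1^2 + 1). -/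
/-- The `i`-th factor `(1-(-t)^i)^((-1)^(i+1) vᵢ)` of the infinite product. -/
noncomputable def prodFactor (v : ℕ → ℕ) (i : ℕ) : PowerSeries ℚ :=
  if Even i then ((1 - PowerSeries.X ^ i)⁻¹) ^ v i
  else (1 + PowerSeries.X ^ i) ^ v i

open PowerSeries

private lemma cast_choose_three' (n : ℕ) : (n.choose 3 : ℚ) = n*(n-1)*(n-2)/6 := by
  induction n with
  | zero => simp
  | succ n ih =>
    rw [Nat.choose_succ_succ', Nat.cast_add, ih, Nat.cast_choose_two]
    push_cast; ring

private theorem coeff_geom' (a : ℚ) (j n k : ℕ) (hj : 0 < j) :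
    (coeff k) ((1 + C a * X ^ j) ^ n) =
      if j ∣ k then (n.choose (k / j) : ℚ) * a ^ (k / j) else 0 := by
  rw [add_comm, add_pow]
  simp only [one_pow, mul_one, map_sum, mul_pow, ← map_pow, ← pow_mul]
  have key : ∀ x, (coeff k) (C (a^x) * X ^ (j*x) * (↑(n.choose x) : PowerSeries ℚ)) =
      if x = k / j ∧ j ∣ k then (n.choose x : ℚ) * a^x else 0 := by
    intro x
    rw [← map_natCast C (n.choose x), coeff_mul_C, coeff_C_mul, coeff_X_pow]
    have : (k = j * x) ↔ (x = k / j ∧ j ∣ k) := by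
      constructor
      · rintro rfl; exact ⟨by rw [Nat.mul_div_cancel_left _ hj], Dvd.intro x rfl⟩
      · rintro ⟨rfl, hd⟩; exact (Nat.mul_div_cancel' hd).symm
    split <;> rename_i h
    · rw [if_pos (this.mp h)]; ring
    · rw [if_neg (fun hc => h (this.mpr hc)), mul_zero, zero_mul]
  simp only [key]
  by_cases hd : j ∣ k
  · simp only [hd, and_true, Finset.sum_ite_eq', Finset.mem_range, if_pos hd]
    split
    · rfl
    · simp [Nat.choose_eq_zero_of_lt (show n < k/j by omega)]
  · simp [hd]

private lemma coeffA' (n k : ℕ) : coeff k ((1 + X : PowerSeries ℚ) ^ n) = (n.choose k : ℚ) := by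
  have h := coeff_geom' 1 1 n k one_pos
  simpa using h

private lemma coeffC' (n k : ℕ) : coeff k ((1 + X ^ 3) ^ n) =
    if 3 ∣ k then (n.choose (k / 3) : ℚ) else 0 := by
  have h := coeff_geom' 1 3 n k (by norm_num)
  simpa using h

private lemma coeffB' (n k : ℕ) : coeff k ((1 - X ^ 2 : PowerSeries ℚ) ^ n) =
    if 2 ∣ k then (n.choose (k / 2) : ℚ) * (-1) ^ (k / 2) else 0 := by
  have h := coeff_geom' (-1) 2 n k (by norm_num)
  rw [show (1 + C (-1) * X ^ 2 : PowerSeries ℚ) = 1 - X ^ 2 by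
    rw [map_neg, map_one]; ring] at h
  exact h

private lemma coeff_mul_zero' (f g : PowerSeries ℚ) : coeff 0 (f * g) =
    coeff 0 f * coeff 0 g := by
  simp [coeff_zero_eq_constantCoeff, map_mul]

private lemma coeff_mul_one' (f g : PowerSeries ℚ) : coeff 1 (f * g) =
    coeff 0 f * coeff 1 g + coeff 1 f * coeff 0 g := by
  rw [coeff_mul, Finset.Nat.sum_antidiagonal_eq_sum_range_succ_mk]
  simp [Finset.sum_range_succ]

private lemma coeff_mul_two' (f g : PowerSeries ℚ) : coeff 2 (f * g) =
    coeff 0 f * coeff 2 g + coeff 1 f * coeff 1 g + coeff 2 f * coeff 0 g := by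
  rw [coeff_mul, Finset.Nat.sum_antidiagonal_eq_sum_range_succ_mk]
  simp [Finset.sum_range_succ]

private lemma coeff_mul_three' (f g : PowerSeries ℚ) : coeff 3 (f * g) =
    coeff 0 f * coeff 3 g + coeff 1 f * coeff 2 g
      + coeff 2 f * coeff 1 g + coeff 3 f * coeff 0 g := by
  rw [coeff_mul, Finset.Nat.sum_antidiagonal_eq_sum_range_succ_mk]
  simp [Finset.sum_range_succ]

private lemma invG' (m : ℕ) :
    ((1 - X ^ 2 : PowerSeries ℚ)⁻¹) ^ m * (1 - X ^ 2) ^ m = 1 := by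
  rw [← mul_pow, PowerSeries.inv_mul_cancel, one_pow]
  simp

private lemma coeffG' (m : ℕ) :
    coeff 0 (((1 - X ^ 2 : PowerSeries ℚ)⁻¹) ^ m) = 1 ∧
    coeff 1 (((1 - X ^ 2 : PowerSeries ℚ)⁻¹) ^ m) = 0 ∧
    coeff 2 (((1 - X ^ 2 : PowerSeries ℚ)⁻¹) ^ m) = m ∧
    coeff 3 (((1 - X ^ 2 : PowerSeries ℚ)⁻¹) ^ m) = 0 := by
  set G := ((1 - X ^ 2 : PowerSeries ℚ)⁻¹) ^ m with hGdef
  have h0 : coeff 0 G = 1 := by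
    simp [hGdef, coeff_zero_eq_constantCoeff, map_pow]
  have h1 : coeff 1 G = 0 := by
    have h := congrArg (coeff 1) (invG' m)
    rw [coeff_mul_one'] at h
    simp [coeffB', h0] at h
    simpa using h
  have h2 : coeff 2 G = m := by
    have h := congrArg (coeff 2) (invG' m)
    rw [coeff_mul_two'] at h
    simp [coeffB', h0, h1] at h
    linarith
  have h3 : coeff 3 G = 0 := by
    have h := congrArg (coeff 3) (invG' m)
    rw [coeff_mul_three'] at h
    simp [coeffB', h0, h1, h2] at h
    simpa [show ¬(2∣3) by decide, ← hGdef, h1] using h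
  exact ⟨h0, h1, h2, h3⟩

/-- If `1 + s₁ t + s₂ t² + ⋯ = ∏_{i≥1} (1-(-t)^i)^((-1)^(i+1) vᵢ)` with `vᵢ ∈ ℕ`, then
`s₁ ≥ 0`, `s₂ ≥ s₁(s₁-1)/2` and `s₃ ≥ (s₁/3)(3s₂ - s₁² + 1)`. -/
theorem low_degree_inequalities (v : ℕ → ℕ) (s : ℕ → ℚ)
    (hs : ∀ N : ℕ, PowerSeries.coeff N (∏ i ∈ Finset.Icc 1 N, prodFactor v i) = s N) :
    0 ≤ s 1 ∧ s 1 * (s 1 - 1) / 2 ≤ s 2 ∧ s 1 / 3 * (3 * s 2 - (s 1) ^ 2 + 1) ≤ s 3 := by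
  obtain ⟨g0, g1, g2, g3⟩ := coeffG' (v 2)
  have p1 : prodFactor v 1 = (1 + X) ^ v 1 := by
    simp [prodFactor]
  have p2 : prodFactor v 2 = ((1 - X ^ 2 : PowerSeries ℚ)⁻¹) ^ v 2 := by
    simp [prodFactor]
  have p3 : prodFactor v 3 = (1 + X ^ 3) ^ v 3 := by
    norm_num [prodFactor, Nat.even_iff]
  have e1 := hs 1
  have e2 := hs 2
  have e3 := hs 3
  rw [show Finset.Icc 1 1 = {1} by rfl, Finset.prod_singleton, p1, coeffA'] at e1
  rw [show Finset.Icc 1 2 = {1, 2} by decide, Finset.prod_insert (by decide),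
    Finset.prod_singleton, p1, p2, coeff_mul_two'] at e2
  rw [show Finset.Icc 1 3 = {1, 2, 3} by decide, Finset.prod_insert (by decide),
    Finset.prod_insert (by decide), Finset.prod_singleton, p1, p2, p3,
    coeff_mul_three'] at e3
  simp only [coeffA', g0, g1, g2, g3, coeff_mul_zero', coeff_mul_one', coeff_mul_two',
    coeff_mul_three', coeffC'] at e2 e3
  norm_num at e1 e2 e3
  -- now e1 : (v 1 : ℚ) = s 1, etc.
  have hb : (0:ℚ) ≤ (v 2 : ℚ) := Nat.cast_nonneg _
  have hc : (0:ℚ) ≤ (v 3 : ℚ) := Nat.cast_nonneg _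
  have ha : (0:ℚ) ≤ (v 1 : ℚ) := Nat.cast_nonneg _
  rw [Nat.cast_choose_two] at e2
  refine ⟨by linarith, by rw [← e1, ← e2]; linarith, ?_⟩
  rw [cast_choose_three'] at e3
  have key : s 1 / 3 * (3 * s 2 - (s 1) ^ 2 + 1) =
      (v 1 : ℚ) * ((v 1 : ℚ) - 1) * ((v 1 : ℚ) - 2) / 6 + (v 1 : ℚ) * (v 2 : ℚ) := by
    rw [← e1, ← e2]; ring
  rw [key, ← e3]
  nlinarith [mul_nonneg ha hc]
end

section
/- Let (f_0,...,f_n) be the f-vector of a flag simplicial complex and set α_k = ∑_{i=0}^{k-1} f_i C(k-1,i). Suppose the reciprocal power series (∑_{k≥0} α_k (-t)^k)^{-1} = ∏_{i≥1}(1-(-t)^i)^{(-1)^{i+1}v_i} for some nonnegative integers v_i. Then for every N ≥ 1, N·v_N = (-1)^N ∑_{d|N} μ(N/d)(-1)^d p_d(α_1, α_2, ..., α_d). -/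
/-- `P` is the family of Newton polynomials expressing power sums in the elementary
symmetric polynomials (variable `i` of `P d` stands for `σ_(i+1)`). -/
def IsNewtonFamily (P : ℕ → MvPolynomial ℕ ℚ) : Prop :=
  ∀ d : ℕ, 1 ≤ d → ∀ n : ℕ, d ≤ n →
    MvPolynomial.aeval (fun i : ℕ => MvPolynomial.esymm (Fin n) ℚ (i + 1)) (P d) =
      MvPolynomial.psum (Fin n) ℚ d

noncomputable section FlagAux

open PowerSeries Finset

/-- `∑_{i ∣ n} X^n`, the inverse of `1 - X^i`. -/
def geomS (i : ℕ) : PowerSeries ℚ := PowerSeries.mk fun n => if i ∣ n then 1 else 0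

/-- the inverse of `1 + X^i`. -/
def altS (i : ℕ) : PowerSeries ℚ :=
  PowerSeries.mk fun n => if i ∣ n then (-1) ^ (n / i) else 0

/-- base inverse series for the `i`-th factor -/
def baseInv (i : ℕ) : PowerSeries ℚ := if Even i then geomS i else altS i

lemma one_sub_mul_geomS {i : ℕ} (hi : 1 ≤ i) : (1 - X ^ i) * geomS i = 1 := by
  ext n
  rw [sub_mul, one_mul, map_sub, mul_comm, coeff_mul_X_pow']
  rcases Nat.eq_zero_or_pos n with rfl | hn
  · simp [geomS, Nat.not_succ_le_zero, hi, Nat.lt_of_lt_of_le Nat.zero_lt_one hi]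
    intro h; omega
  · rw [PowerSeries.coeff_one, if_neg hn.ne']
    by_cases hdvd : i ∣ n
    · have hin : i ≤ n := Nat.le_of_dvd hn hdvd
      rw [if_pos hin]
      simp only [geomS, coeff_mk]
      rw [if_pos hdvd, if_pos ((Nat.dvd_sub hdvd dvd_rfl))]
      ring
    · simp only [geomS, coeff_mk]
      rw [if_neg hdvd]
      by_cases hin : i ≤ n
      · rw [if_pos hin, if_neg, sub_zero]
        intro hc
        have h2 : i ∣ (n - i) + i := Dvd.dvd.add hc dvd_rfl
        rw [Nat.sub_add_cancel hin] at h2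
        exact hdvd h2
      · rw [if_neg hin, sub_zero]

lemma one_add_mul_altS {i : ℕ} (hi : 1 ≤ i) : (1 + X ^ i) * altS i = 1 := by
  ext n
  rw [add_mul, one_mul, map_add, mul_comm, coeff_mul_X_pow']
  rcases Nat.eq_zero_or_pos n with rfl | hn
  · simp [altS, Nat.not_succ_le_zero, hi, Nat.lt_of_lt_of_le Nat.zero_lt_one hi]
    intro h; omega
  · rw [PowerSeries.coeff_one, if_neg hn.ne']
    by_cases hdvd : i ∣ n
    · have hin : i ≤ n := Nat.le_of_dvd hn hdvd
      rw [if_pos hin]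
      simp only [altS, coeff_mk]
      rw [if_pos hdvd, if_pos ((Nat.dvd_sub hdvd dvd_rfl))]
      obtain ⟨m, rfl⟩ := hdvd
      have h1 : 1 ≤ m := by
        rcases Nat.eq_zero_or_pos m with rfl | h
        · simp at hn
        · exact h
      have hs : (i * m - i) / i = m - 1 := by
        rw [← Nat.mul_sub_one, Nat.mul_div_cancel_left _ (by omega : 0 < i)]
      have hm : i * m / i = m := Nat.mul_div_cancel_left _ (by omega)
      rw [hs, hm]
      have hmm : m = (m - 1) + 1 := by omega
      rw [hmm, pow_succ]
      have h3 : (m - 1 + 1 - 1) = m - 1 := by omega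
      rw [h3]
      ring
    · simp only [altS, coeff_mk]
      rw [if_neg hdvd]
      by_cases hin : i ≤ n
      · rw [if_pos hin, if_neg, add_zero]
        intro hc
        have h2 : i ∣ (n - i) + i := Dvd.dvd.add hc dvd_rfl
        rw [Nat.sub_add_cancel hin] at h2
        exact hdvd h2
      · rw [if_neg hin, add_zero]

lemma constC_one_sub {i : ℕ} (hi : 1 ≤ i) :
    constantCoeff (1 - X ^ i : ℚ⟦X⟧) = 1 := by
  have : i ≠ 0 := by omega
  simp [this]

lemma constC_one_add {i : ℕ} (hi : 1 ≤ i) :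
    constantCoeff (1 + X ^ i : ℚ⟦X⟧) = 1 := by
  have : i ≠ 0 := by omega
  simp [this]

lemma geomS_eq {i : ℕ} (hi : 1 ≤ i) : (1 - X ^ i : PowerSeries ℚ)⁻¹ = geomS i := by
  rw [PowerSeries.inv_eq_iff_mul_eq_one (by rw [constC_one_sub hi]; norm_num), mul_comm]
  exact one_sub_mul_geomS hi

lemma altS_eq {i : ℕ} (hi : 1 ≤ i) : (1 + X ^ i : PowerSeries ℚ)⁻¹ = altS i := by
  rw [PowerSeries.inv_eq_iff_mul_eq_one (by rw [constC_one_add hi]; norm_num), mul_comm]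
  exact one_add_mul_altS hi


lemma X_pow_deriv {i : ℕ} (hi : 1 ≤ i) :
    d⁄dX ℚ (X ^ i : PowerSeries ℚ) = (i : ℚ⟦X⟧) * X ^ (i - 1) := by
  rw [Derivation.leibniz_pow, derivative_X]
  simp [nsmul_eq_mul, smul_eq_mul]

lemma factor_logderiv (v : ℕ → ℕ) {i : ℕ} (hi : 1 ≤ i) :
    X * d⁄dX ℚ (prodFactor v i) =
      ((v i * i : ℕ) : ℚ⟦X⟧) * (X ^ i * baseInv i) * prodFactor v i := by
  obtain ⟨j, rfl⟩ : ∃ j, i = j + 1 := ⟨i - 1, by omega⟩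
  rcases Nat.eq_zero_or_pos (v (j + 1)) with hv0 | hv1
  · simp [prodFactor, hv0, Derivation.map_one_eq_zero]
  obtain ⟨w, hw⟩ : ∃ w, v (j + 1) = w + 1 := ⟨v (j + 1) - 1, by omega⟩
  by_cases he : Even (j + 1)
  · have hb : (1 - X ^ (j + 1) : ℚ⟦X⟧)⁻¹ = geomS (j + 1) := geomS_eq hi
    rw [prodFactor, if_pos he, baseInv, if_pos he, Derivation.leibniz_pow,
      PowerSeries.derivative_inv', map_sub, Derivation.map_one_eq_zero, X_pow_deriv hi, hb, hw]
    simp only [smul_eq_mul, nsmul_eq_mul, Nat.add_sub_cancel]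
    push_cast
    ring
  · have h1 : (1 + X ^ (j + 1)) * altS (j + 1) = 1 := one_add_mul_altS hi
    rw [prodFactor, if_neg he, baseInv, if_neg he, Derivation.leibniz_pow,
      map_add, Derivation.map_one_eq_zero, X_pow_deriv hi, hw]
    simp only [smul_eq_mul, nsmul_eq_mul, Nat.add_sub_cancel]
    push_cast
    linear_combination (-((w:ℚ⟦X⟧) + 1) * ((j:ℚ⟦X⟧) + 1) * X ^ (j + 1) *
      (1 + X ^ (j + 1)) ^ w) * h1

lemma prod_logderiv (v : ℕ → ℕ) (s : Finset ℕ) (hs : ∀ i ∈ s, 1 ≤ i) :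
    X * d⁄dX ℚ (∏ i ∈ s, prodFactor v i) =
      (∑ i ∈ s, ((v i * i : ℕ) : ℚ⟦X⟧) * (X ^ i * baseInv i)) * ∏ i ∈ s, prodFactor v i := by
  induction s using Finset.induction_on with
  | empty => simp [Derivation.map_one_eq_zero]
  | @insert a s ha ih =>
    rw [Finset.prod_insert ha, Finset.sum_insert ha, Derivation.leibniz]
    have ih' := ih (fun i hi => hs i (Finset.mem_insert_of_mem hi))
    have key := factor_logderiv v (hs a (Finset.mem_insert_self a s))
    simp only [smul_eq_mul]
    linear_combination (prodFactor v a) * ih' + (∏ i ∈ s, prodFactor v i) * key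

lemma dvd_sub_mul {M : ℕ} {A B C D : ℚ⟦X⟧} (h1 : (X : ℚ⟦X⟧) ^ M ∣ A - B)
    (h2 : (X : ℚ⟦X⟧) ^ M ∣ C - D) : (X : ℚ⟦X⟧) ^ M ∣ A * C - B * D := by
  have h : A * C - B * D = (A - B) * C + B * (C - D) := by ring
  rw [h]; exact dvd_add (h1.mul_right _) (h2.mul_left _)

lemma X_dvd_X_mul_deriv {M : ℕ} {A : ℚ⟦X⟧} (h : (X : ℚ⟦X⟧) ^ M ∣ A) :
    (X : ℚ⟦X⟧) ^ M ∣ X * d⁄dX ℚ A := by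
  rcases Nat.eq_zero_or_pos M with rfl | hM
  · simpa using one_dvd _
  obtain ⟨m, rfl⟩ : ∃ m, M = m + 1 := ⟨M - 1, by omega⟩
  obtain ⟨C, rfl⟩ := h
  rw [Derivation.leibniz, Derivation.leibniz_pow, derivative_X]
  simp only [smul_eq_mul, nsmul_eq_mul, Nat.add_sub_cancel, mul_one]
  exact ⟨X * d⁄dX ℚ C + ((m : ℚ⟦X⟧) + 1) * C, by push_cast; ring⟩

lemma prod_sub_one {M : ℕ} {s : Finset ℕ} {f : ℕ → ℚ⟦X⟧}
    (h : ∀ i ∈ s, (X : ℚ⟦X⟧) ^ M ∣ f i - 1) :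
    (X : ℚ⟦X⟧) ^ M ∣ (∏ i ∈ s, f i) - 1 := by
  induction s using Finset.induction_on with
  | empty => simp
  | @insert a s ha ih =>
    rw [Finset.prod_insert ha]
    have := dvd_sub_mul (h a (Finset.mem_insert_self a s))
      (ih (fun i hi => h i (Finset.mem_insert_of_mem hi)))
    simpa using this

lemma geomS_sub_one {i : ℕ} (hi : 1 ≤ i) : (X : ℚ⟦X⟧) ^ i ∣ geomS i - 1 := by
  rw [PowerSeries.X_pow_dvd_iff]
  intro m hm
  rcases Nat.eq_zero_or_pos m with rfl | hm0
  · simp [geomS]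
  · rw [map_sub, PowerSeries.coeff_one, if_neg hm0.ne']
    simp only [geomS, coeff_mk]
    rw [if_neg (fun hc => absurd (Nat.le_of_dvd hm0 hc) (by omega)), sub_zero]

lemma factor_sub_one (v : ℕ → ℕ) {i : ℕ} (hi : 1 ≤ i) :
    (X : ℚ⟦X⟧) ^ i ∣ prodFactor v i - 1 := by
  rw [prodFactor]
  by_cases he : Even i
  · rw [if_pos he, geomS_eq hi]
    calc (X : ℚ⟦X⟧) ^ i ∣ geomS i - 1 := geomS_sub_one hi
      _ ∣ geomS i ^ v i - 1 := by
          simpa using sub_dvd_pow_sub_pow (geomS i) 1 (v i)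
  · rw [if_neg he]
    calc (X : ℚ⟦X⟧) ^ i ∣ (1 + X ^ i) - 1 := by simp
      _ ∣ (1 + X ^ i) ^ v i - 1 := by
          have h := sub_dvd_pow_sub_pow (1 + X ^ i : ℚ⟦X⟧) 1 (v i)
          rwa [one_pow] at h

lemma coeff_term_dvd (v : ℕ → ℕ) {i n : ℕ} (hi : 1 ≤ i) (hn : 1 ≤ n) (hdvd : i ∣ n) :
    (PowerSeries.coeff n) (((v i * i : ℕ) : ℚ⟦X⟧) * (X ^ i * baseInv i)) =
      (-1 : ℚ) ^ n * ((-1) ^ i * i * (v i)) := by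
  obtain ⟨m, rfl⟩ := hdvd
  have hm : 1 ≤ m := by
    rcases Nat.eq_zero_or_pos m with rfl | h
    · simp at hn
    · exact h
  obtain ⟨m', rfl⟩ : ∃ m', m = m' + 1 := ⟨m - 1, by omega⟩
  have hin : i ≤ i * (m' + 1) := Nat.le_mul_of_pos_right i hm
  have hsub : i ∣ i * (m' + 1) - i := Nat.dvd_sub (Dvd.intro (m' + 1) rfl) dvd_rfl
  have hs : (i * (m' + 1) - i) / i = m' := by
    rw [← Nat.mul_sub_one, Nat.mul_div_cancel_left _ (by omega : 0 < i), Nat.add_sub_cancel]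
  rw [← map_natCast (PowerSeries.C (R := ℚ)) (v i * i), PowerSeries.coeff_C_mul,
    mul_comm (X ^ i) (baseInv i), PowerSeries.coeff_mul_X_pow', if_pos hin]
  by_cases he : Even i
  · have hne : Even (i * (m' + 1)) := he.mul_right (m' + 1)
    rw [baseInv, if_pos he]
    simp only [geomS, coeff_mk, if_pos hsub]
    rw [hne.neg_one_pow, he.neg_one_pow]
    push_cast
    ring
  · have hio : Odd i := Nat.odd_iff.mpr (Nat.not_even_iff.mp he)
    rw [baseInv, if_neg he]
    simp only [altS, coeff_mk, if_pos hsub]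
    rw [hs]
    have hpow : ((-1 : ℚ)) ^ (i * (m' + 1)) = (-1) ^ (m' + 1) := by
      rw [pow_mul, hio.neg_one_pow]
    rw [hpow, hio.neg_one_pow, pow_succ]
    push_cast
    ring

lemma coeff_term_not_dvd (v : ℕ → ℕ) {i n : ℕ} (hi : 1 ≤ i) (hndvd : ¬ i ∣ n) :
    (PowerSeries.coeff n) (((v i * i : ℕ) : ℚ⟦X⟧) * (X ^ i * baseInv i)) = 0 := by
  rw [← map_natCast (PowerSeries.C (R := ℚ)) (v i * i), PowerSeries.coeff_C_mul,
    mul_comm (X ^ i) (baseInv i), PowerSeries.coeff_mul_X_pow']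
  by_cases hin : i ≤ n
  · rw [if_pos hin]
    have hns : ¬ i ∣ n - i := by
      intro hc
      have h2 : i ∣ (n - i) + i := Dvd.dvd.add hc dvd_rfl
      rw [Nat.sub_add_cancel hin] at h2
      exact hndvd h2
    rw [baseInv]
    by_cases he : Even i
    · rw [if_pos he]; simp only [geomS, coeff_mk, if_neg hns, mul_zero]
    · rw [if_neg he]; simp only [altS, coeff_mk, if_neg hns, mul_zero]
  · rw [if_neg hin, mul_zero]

lemma coeff_T {N n : ℕ} (v : ℕ → ℕ) (hn : 1 ≤ n) (hnN : n ≤ N) :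
    (PowerSeries.coeff n)
        (∑ i ∈ Finset.Icc 1 N, ((v i * i : ℕ) : ℚ⟦X⟧) * (X ^ i * baseInv i)) =
      (-1 : ℚ) ^ n * ∑ i ∈ n.divisors, (-1 : ℚ) ^ i * (i : ℚ) * (v i : ℚ) := by
  rw [map_sum]
  have hsub : n.divisors ⊆ Finset.Icc 1 N := by
    intro i hi
    rw [Nat.mem_divisors] at hi
    rw [Finset.mem_Icc]
    constructor
    · exact Nat.pos_of_dvd_of_pos hi.1 hn
    · exact le_trans (Nat.le_of_dvd hn hi.1) hnN
  rw [← Finset.sum_subset hsub ?_]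
  · rw [Finset.mul_sum]
    refine Finset.sum_congr rfl fun i hi => ?_
    rw [Nat.mem_divisors] at hi
    exact coeff_term_dvd v (Nat.pos_of_dvd_of_pos hi.1 hn) hn hi.1
  · intro i hiI hnd
    have hi1 : 1 ≤ i := (Finset.mem_Icc.mp hiI).1
    have hnotdvd : ¬ i ∣ n := fun hc => hnd (Nat.mem_divisors.mpr ⟨hc, by omega⟩)
    exact coeff_term_not_dvd v hi1 hnotdvd

open MvPolynomial in
lemma eq_zero_of_aeval_esymm (Q : MvPolynomial ℕ ℚ) (n0 : ℕ)
    (h : ∀ m, n0 ≤ m →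
      MvPolynomial.aeval (fun i : ℕ => MvPolynomial.esymm (Fin m) ℚ (i + 1)) Q = 0) :
    Q = 0 := by
  obtain ⟨k, g, hg, Q', rfl⟩ := MvPolynomial.exists_fin_rename Q
  set M := (Finset.univ.sup g) + 1 with hM
  have hgM : ∀ j, g j < M := fun j => Nat.lt_succ_of_le (Finset.le_sup (Finset.mem_univ j))
  set g' : Fin k → Fin M := fun j => ⟨g j, hgM j⟩ with hg'
  have hg'inj : Function.Injective g' := fun a b hab => hg (congrArg Fin.val hab)
  set m := max n0 M with hm
  have hkey : (MvPolynomial.esymmAlgHom (Fin m) ℚ M) (MvPolynomial.rename g' Q') = 0 := by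
    have h0 := h m (le_max_left _ _)
    rw [MvPolynomial.aeval_rename] at h0
    apply Subtype.ext
    rw [MvPolynomial.esymmAlgHom_apply, MvPolynomial.aeval_rename, ZeroMemClass.coe_zero]
    exact h0
  have h1 : MvPolynomial.rename g' Q' = 0 :=
    (MvPolynomial.esymmAlgHom_fin_injective ℚ (le_max_right n0 M))
      (hkey.trans (map_zero _).symm)
  have h2 : Q' = 0 :=
    (MvPolynomial.rename_injective g' hg'inj) (h1.trans (map_zero _).symm)
  rw [h2, map_zero]

open MvPolynomial in
lemma newton_alpha (α : ℕ → ℕ) (hα0 : α 0 = 1) (P : ℕ → MvPolynomial ℕ ℚ)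
    (hP : IsNewtonFamily P) (n : ℕ) (hn : 1 ≤ n) :
    ∑ ab ∈ Finset.HasAntidiagonal.antidiagonal n, (-1 : ℚ) ^ ab.1 * (α ab.1) *
        (if ab.2 = 0 then 0 else MvPolynomial.eval (fun i : ℕ => (α (i + 1) : ℚ)) (P ab.2)) =
      (-1) ^ (n + 1) * n * (α n) := by
  classical
  set E : ℕ → MvPolynomial ℕ ℚ := fun j => if j = 0 then 1 else MvPolynomial.X (j - 1) with hE
  set Q : MvPolynomial ℕ ℚ :=
    (∑ ab ∈ Finset.HasAntidiagonal.antidiagonal n, MvPolynomial.C ((-1 : ℚ) ^ ab.1) *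
        (E ab.1 * (if ab.2 = 0 then 0 else P ab.2))) -
      MvPolynomial.C ((-1 : ℚ) ^ (n + 1) * n) * E n with hQ
  have hQ0 : Q = 0 := by
    apply eq_zero_of_aeval_esymm Q n
    intro m hm
    have hEs : ∀ j, MvPolynomial.aeval
        (fun i : ℕ => MvPolynomial.esymm (Fin m) ℚ (i + 1)) (E j)
        = MvPolynomial.esymm (Fin m) ℚ j := by
      intro j
      rcases Nat.eq_zero_or_pos j with rfl | hj
      · simp [hE, MvPolynomial.esymm_zero]
      · rw [hE]
        simp only [if_neg hj.ne']
        rw [MvPolynomial.aeval_X]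
        have hjj : j - 1 + 1 = j := by omega
        rw [hjj]
    rw [hQ, map_sub, map_sum]
    have hterm : ∀ ab ∈ Finset.HasAntidiagonal.antidiagonal n,
        MvPolynomial.aeval (fun i : ℕ => MvPolynomial.esymm (Fin m) ℚ (i + 1))
          (MvPolynomial.C ((-1 : ℚ) ^ ab.1) * (E ab.1 * (if ab.2 = 0 then 0 else P ab.2))) =
        (-1 : MvPolynomial (Fin m) ℚ) ^ ab.1 * MvPolynomial.esymm (Fin m) ℚ ab.1 *
          (if ab.2 = 0 then 0 else MvPolynomial.psum (Fin m) ℚ ab.2) := by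
      intro ab hab
      rw [Finset.HasAntidiagonal.mem_antidiagonal] at hab
      rw [map_mul, map_mul, MvPolynomial.aeval_C, hEs]
      by_cases hb : ab.2 = 0
      · rw [if_pos hb, if_pos hb, map_zero, mul_zero, mul_zero]
        ring
      · rw [if_neg hb, if_neg hb, hP ab.2 (Nat.one_le_iff_ne_zero.mpr hb) m (by omega)]
        rw [MvPolynomial.algebraMap_eq, map_pow, map_neg, map_one, mul_assoc]
    rw [Finset.sum_congr rfl hterm]
    set F : ℕ × ℕ → MvPolynomial (Fin m) ℚ := fun ab =>
      (-1 : MvPolynomial (Fin m) ℚ) ^ ab.1 * MvPolynomial.esymm (Fin m) ℚ ab.1 *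
        (if ab.2 = 0 then 0 else MvPolynomial.psum (Fin m) ℚ ab.2) with hF
    have hsplit := Finset.sum_filter_add_sum_filter_not (Finset.HasAntidiagonal.antidiagonal n)
      (fun ab => ab.1 ∈ Set.Ioo 0 n) F
    have hcompl : Finset.filter (fun ab => ¬ ab.1 ∈ Set.Ioo 0 n) (Finset.HasAntidiagonal.antidiagonal n)
        = {(0, n), (n, 0)} := by
      ext ⟨a, b⟩
      simp only [Finset.mem_filter, Finset.HasAntidiagonal.mem_antidiagonal, Set.mem_Ioo,
        Finset.mem_insert, Finset.mem_singleton, Prod.mk.injEq]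
      omega
    have hpair : ∑ ab ∈ Finset.filter (fun ab => ¬ ab.1 ∈ Set.Ioo 0 n)
        (Finset.HasAntidiagonal.antidiagonal n), F ab = MvPolynomial.psum (Fin m) ℚ n := by
      rw [hcompl, Finset.sum_insert (by
        simp only [Finset.mem_singleton, Prod.mk.injEq]
        omega), Finset.sum_singleton]
      rw [hF]
      simp only [pow_zero, one_mul, MvPolynomial.esymm_zero, if_neg (by omega : ¬ n = 0),
        if_pos rfl, mul_zero, add_zero]
      simp
    have hnewton := MvPolynomial.psum_eq_mul_esymm_sub_sum (Fin m) ℚ n (by omega)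
    have hCcast : (MvPolynomial.C ((-1 : ℚ) ^ (n + 1) * n) : MvPolynomial (Fin m) ℚ)
        = (-1) ^ (n + 1) * n := by
      rw [map_mul, map_pow, map_neg, map_one, map_natCast]
    have hIoo : ∑ x ∈ Finset.filter (fun x => x.1 ∈ Set.Ioo 0 n) (Finset.HasAntidiagonal.antidiagonal n), F x
        = ∑ x ∈ Finset.filter (fun x => x.1 ∈ Set.Ioo 0 n) (Finset.HasAntidiagonal.antidiagonal n),
            (-1 : MvPolynomial (Fin m) ℚ) ^ x.1 * MvPolynomial.esymm (Fin m) ℚ x.1 *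
              MvPolynomial.psum (Fin m) ℚ x.2 := by
      refine Finset.sum_congr rfl fun x hx => ?_
      rw [Finset.mem_filter, Finset.HasAntidiagonal.mem_antidiagonal, Set.mem_Ioo] at hx
      rw [hF]
      simp only
      rw [if_neg (by omega : ¬ x.2 = 0)]
    rw [← hsplit, hpair, hIoo, map_mul, MvPolynomial.aeval_C, MvPolynomial.algebraMap_eq,
      hCcast, hEs]
    linear_combination hnewton
  have hev := congrArg (MvPolynomial.eval fun i : ℕ => (α (i + 1) : ℚ)) hQ0
  rw [hQ, map_sub, map_sum, map_zero] at hev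
  have hEe : ∀ j, MvPolynomial.eval (fun i : ℕ => (α (i + 1) : ℚ)) (E j) = (α j : ℚ) := by
    intro j
    rcases Nat.eq_zero_or_pos j with rfl | hj
    · simp [hE, hα0]
    · rw [hE]
      simp only [if_neg hj.ne']
      rw [MvPolynomial.eval_X]
      have hjj : j - 1 + 1 = j := by omega
      rw [hjj]
  have hterm2 : ∀ ab ∈ Finset.HasAntidiagonal.antidiagonal n,
      MvPolynomial.eval (fun i : ℕ => (α (i + 1) : ℚ))
        (MvPolynomial.C ((-1 : ℚ) ^ ab.1) * (E ab.1 * (if ab.2 = 0 then 0 else P ab.2))) =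
      (-1 : ℚ) ^ ab.1 * (α ab.1) *
        (if ab.2 = 0 then 0 else
          MvPolynomial.eval (fun i : ℕ => (α (i + 1) : ℚ)) (P ab.2)) := by
    intro ab _
    rw [map_mul, map_mul, MvPolynomial.eval_C, hEe, mul_assoc]
    by_cases hb : ab.2 = 0
    · rw [if_pos hb, if_pos hb, map_zero]
    · rw [if_neg hb, if_neg hb]
  rw [Finset.sum_congr rfl hterm2, map_mul, MvPolynomial.eval_C, hEe] at hev
  linear_combination hev

end FlagAux

open PowerSeries Finset

/-- For a flag simplicial complex with `f`-vector `(f₀,…)`, `α_k = ∑ fᵢ C(k-1,i)`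
(`α₀ = 1`), if `(∑_k α_k (-t)^k)⁻¹ = ∏_{i≥1} (1-(-t)^i)^((-1)^(i+1) vᵢ)` for
nonnegative integers `vᵢ`, then `N·v_N = (-1)^N ∑_{d∣N} μ(N/d) (-1)^d p_d(α₁,…,α_d)`. -/
theorem flag_moebius_formula {V : Type*} [DecidableEq V] [Fintype V]
    (K : SimplicialComplex V) (hK : K.IsFlag)
    (f : ℕ → ℕ) (hf : ∀ i, f i = (K.faces.filter fun σ => σ.card = i + 1).card)
    (α : ℕ → ℕ) (hα0 : α 0 = 1)
    (hα : ∀ k, 1 ≤ k → α k = ∑ i ∈ Finset.range k, f i * (k - 1).choose i)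
    (v : ℕ → ℕ) (P : ℕ → MvPolynomial ℕ ℚ) (hP : IsNewtonFamily P)
    (hv : ∀ N : ℕ,
      PowerSeries.coeff N (PowerSeries.mk fun k => ((-1) ^ k * (α k : ℚ)))⁻¹ =
        PowerSeries.coeff N (∏ i ∈ Finset.Icc 1 N, prodFactor v i))
    (N : ℕ) (hN : 1 ≤ N) :
    (N : ℚ) * v N =
      (-1) ^ N * ∑ d ∈ N.divisors,
        (ArithmeticFunction.moebius (N / d) : ℚ) * (-1) ^ d *
          MvPolynomial.eval (fun i : ℕ => (α (i + 1) : ℚ)) (P d) := by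
  classical
  set F : PowerSeries ℚ := PowerSeries.mk fun k => ((-1) ^ k * (α k : ℚ)) with hFdef
  set S : PowerSeries ℚ := PowerSeries.mk fun k =>
    if k = 0 then 0 else MvPolynomial.eval (fun i : ℕ => (α (i + 1) : ℚ)) (P k) with hSdef
  have hF0' : PowerSeries.constantCoeff F ≠ 0 := by
    rw [hFdef, ← PowerSeries.coeff_zero_eq_constantCoeff_apply, PowerSeries.coeff_mk, hα0]
    norm_num
  have hFG : F * F⁻¹ = 1 := PowerSeries.mul_inv_cancel F hF0'
  -- exact Newton identity for the series F
  have hNewton : PowerSeries.X * (d⁄dX ℚ F) + F * S = 0 := by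
    ext nn
    rw [map_add, map_zero]
    rcases Nat.eq_zero_or_pos nn with rfl | hnn
    · simp only [PowerSeries.coeff_zero_eq_constantCoeff_apply, map_mul,
        PowerSeries.constantCoeff_X, zero_mul, zero_add, hSdef, PowerSeries.constantCoeff_mk]
      simp
    obtain ⟨nm, rfl⟩ : ∃ nm, nn = nm + 1 := ⟨nn - 1, by omega⟩
    rw [PowerSeries.coeff_succ_X_mul, PowerSeries.coeff_derivative, PowerSeries.coeff_mul]
    have hNA := newton_alpha α hα0 P hP (nm + 1) (by omega)
    have hsum : ∑ p ∈ Finset.HasAntidiagonal.antidiagonal (nm + 1),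
        PowerSeries.coeff p.1 F * PowerSeries.coeff p.2 S =
        ∑ ab ∈ Finset.HasAntidiagonal.antidiagonal (nm + 1), (-1 : ℚ) ^ ab.1 * (α ab.1) *
          (if ab.2 = 0 then 0
            else MvPolynomial.eval (fun i : ℕ => (α (i + 1) : ℚ)) (P ab.2)) := by
      refine Finset.sum_congr rfl fun p _ => ?_
      rw [hFdef, hSdef, PowerSeries.coeff_mk, PowerSeries.coeff_mk]
    rw [hsum, hNA, hFdef, PowerSeries.coeff_mk]
    push_cast
    ring
  -- key coefficient identity
  have key : ∀ n, 1 ≤ n →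
      MvPolynomial.eval (fun i : ℕ => (α (i + 1) : ℚ)) (P n) =
        (-1 : ℚ) ^ n * ∑ i ∈ n.divisors, (-1 : ℚ) ^ i * (i : ℚ) * (v i : ℚ) := by
    intro n hn
    set H : ℚ⟦X⟧ := ∏ i ∈ Finset.Icc 1 n, prodFactor v i with hH
    set T : ℚ⟦X⟧ := ∑ i ∈ Finset.Icc 1 n, ((v i * i : ℕ) : ℚ⟦X⟧) * (X ^ i * baseInv i) with hT
    have hlog : PowerSeries.X * d⁄dX ℚ H = T * H :=
      prod_logderiv v _ (fun i hi => (Finset.mem_Icc.mp hi).1)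
    have hIoc : ∀ k : ℕ, Finset.Icc 1 k = Finset.Ioc 0 k := fun k => rfl
    have hGH : ∀ b, b ≤ n → PowerSeries.coeff b F⁻¹ = PowerSeries.coeff b H := by
      intro b hb
      rw [hv b]
      have hsplitP : (∏ i ∈ Finset.Ioc 0 b, prodFactor v i) *
          (∏ i ∈ Finset.Ioc b n, prodFactor v i) = ∏ i ∈ Finset.Ioc 0 n, prodFactor v i :=
        Finset.prod_Ioc_consecutive _ (Nat.zero_le b) hb
      have htail : (X : ℚ⟦X⟧) ^ (b + 1) ∣ (∏ i ∈ Finset.Ioc b n, prodFactor v i) - 1 := by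
        apply prod_sub_one
        intro i hi
        rw [Finset.mem_Ioc] at hi
        exact dvd_trans (pow_dvd_pow X hi.1) (factor_sub_one v (by omega))
      have hdvd : (X : ℚ⟦X⟧) ^ (b + 1) ∣ H - ∏ i ∈ Finset.Icc 1 b, prodFactor v i := by
        rw [hH, hIoc, hIoc, ← hsplitP]
        have heq : (∏ i ∈ Finset.Ioc 0 b, prodFactor v i) *
            (∏ i ∈ Finset.Ioc b n, prodFactor v i) - (∏ i ∈ Finset.Ioc 0 b, prodFactor v i) =
            (∏ i ∈ Finset.Ioc 0 b, prodFactor v i) *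
              ((∏ i ∈ Finset.Ioc b n, prodFactor v i) - 1) := by ring
        rw [heq]
        exact htail.mul_left _
      have hco := PowerSeries.X_pow_dvd_iff.mp hdvd b (lt_add_one b)
      rw [map_sub, sub_eq_zero] at hco
      exact hco.symm
    have hFH : (X : ℚ⟦X⟧) ^ (n + 1) ∣ F * H - 1 := by
      rw [PowerSeries.X_pow_dvd_iff]
      intro m hm
      rw [map_sub, PowerSeries.coeff_mul]
      have hsum2 : ∑ p ∈ Finset.HasAntidiagonal.antidiagonal m,
          PowerSeries.coeff p.1 F * PowerSeries.coeff p.2 H =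
          ∑ p ∈ Finset.HasAntidiagonal.antidiagonal m,
            PowerSeries.coeff p.1 F * PowerSeries.coeff p.2 F⁻¹ := by
        refine Finset.sum_congr rfl fun p hp => ?_
        rw [Finset.HasAntidiagonal.mem_antidiagonal] at hp
        rw [hGH p.2 (by omega)]
      rw [hsum2, ← PowerSeries.coeff_mul, hFG, sub_self]
    have hXD : (X : ℚ⟦X⟧) ^ (n + 1) ∣ X * d⁄dX ℚ (F * H - 1) := X_dvd_X_mul_deriv hFH
    have hXDF : PowerSeries.X * (d⁄dX ℚ F) = -(F * S) := by
      linear_combination hNewton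
    have hexp : X * d⁄dX ℚ (F * H - 1) = F * (T - S) * H := by
      rw [map_sub, Derivation.map_one_eq_zero, sub_zero, Derivation.leibniz]
      simp only [smul_eq_mul]
      have : X * (F * d⁄dX ℚ H + H * d⁄dX ℚ F) =
          F * (X * d⁄dX ℚ H) + H * (X * d⁄dX ℚ F) := by ring
      rw [this, hlog, hXDF]
      ring
    rw [hexp] at hXD
    have h4 : (X : ℚ⟦X⟧) ^ (n + 1) ∣ T - S := by
      have h5 : T - S = -((T - S) * (F * H - 1)) + F * (T - S) * H := by ring
      rw [h5]
      exact dvd_add ((hFH.mul_left (T - S)).neg_right) hXD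
    have h8 := PowerSeries.X_pow_dvd_iff.mp h4 n (lt_add_one n)
    rw [map_sub, sub_eq_zero] at h8
    have hTc : PowerSeries.coeff n T =
        (-1 : ℚ) ^ n * ∑ i ∈ n.divisors, (-1 : ℚ) ^ i * (i : ℚ) * (v i : ℚ) := by
      rw [hT]
      exact coeff_T v hn le_rfl
    have hSc : PowerSeries.coeff n S =
        MvPolynomial.eval (fun i : ℕ => (α (i + 1) : ℚ)) (P n) := by
      rw [hSdef, PowerSeries.coeff_mk, if_neg (by omega : ¬ n = 0)]
    rw [← hSc, ← h8, hTc]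
  -- Möbius inversion
  have hdivsum : ∀ n : ℕ, 0 < n → ∑ i ∈ n.divisors, ((-1 : ℚ) ^ i * (i : ℚ) * (v i : ℚ)) =
      (-1 : ℚ) ^ n * MvPolynomial.eval (fun i : ℕ => (α (i + 1) : ℚ)) (P n) := by
    intro n hn
    rw [key n hn, ← mul_assoc, ← pow_add]
    rw [Even.neg_one_pow ⟨n, by ring⟩, one_mul]
  have hmob := ArithmeticFunction.sum_eq_iff_sum_mul_moebius_eq.mp hdivsum N (by omega)
  rw [Nat.sum_divisorsAntidiagonal'
    (f := fun a b => (ArithmeticFunction.moebius a : ℚ) *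
      ((-1 : ℚ) ^ b * MvPolynomial.eval (fun i : ℕ => (α (i + 1) : ℚ)) (P b)))] at hmob
  have hRHS : ∑ d ∈ N.divisors,
      (ArithmeticFunction.moebius (N / d) : ℚ) * (-1) ^ d *
        MvPolynomial.eval (fun i : ℕ => (α (i + 1) : ℚ)) (P d) =
      ∑ d ∈ N.divisors, (ArithmeticFunction.moebius (N / d) : ℚ) *
        ((-1 : ℚ) ^ d * MvPolynomial.eval (fun i : ℕ => (α (i + 1) : ℚ)) (P d)) := by
    refine Finset.sum_congr rfl fun d _ => by ring
  rw [hRHS, hmob]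
  have hsq : ((-1 : ℚ) ^ N) * ((-1 : ℚ) ^ N) = 1 := by
    rw [← pow_add, Even.neg_one_pow ⟨N, by ring⟩]
  calc (N : ℚ) * v N = ((-1 : ℚ) ^ N * (-1 : ℚ) ^ N) * ((N : ℚ) * v N) := by rw [hsq, one_mul]
    _ = (-1 : ℚ) ^ N * ((-1 : ℚ) ^ N * (N : ℚ) * (v N : ℚ)) := by ring
end
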